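/- Fix integers n, k with 1 ≤ k ≤ n, let d = 5 log₂ n, and let t be a nonnegative integer with 2^{dt} ≤ k!. Let 𝒟 be any distribution over (({0,1}^d))^n, let D ~ 𝒟, let X = (X_1,...,X_n) be a uniformly random permutation of the entries of D (the permutation chosen independently of D), and let C be the output of Encrypermute_k on input X. Then D and C are independent random variables. -/

import Mathlib

/-!
Fix the data `x = D ω`. The output is then a function of the uniform pair `(σ, u)` alone, and
every value `c ∈ ℤ/k!` has the same number `n!` of preimages among the `n! · k!` pairs. If `x` has
a repeated entry, the output is `u` itself. Otherwise, replacing `σ` by `σ ∘ τ` for a permutation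
`τ` of the first `k` positions leaves the encoded tail `m` unchanged and turns the sorting
permutation `r` into `τ⁻¹ r`, so on each coset `σ Sₖ` the output runs once through `ℤ/k!`.
Since `(σ, u)` is uniform and independent of `D`, the conditional law of the output given
`D = x` is uniform for every `x`, which is independence.
-/

open MeasureTheory ProbabilityTheory Nat

instance (k : ℕ) : NeZero (k !) := ⟨(Nat.factorial_pos k).ne'⟩

instance (n : ℕ) : MeasurableSpace (Equiv.Perm (Fin n)) := ⊤

instance (m : ℕ) : MeasurableSpace (ZMod m) := ⊤

open Function Equiv Finset

theorem Tuple.sort_comp_perm {α : Type*} [LinearOrder α] {k : ℕ} {y : Fin k → α}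
    (hy : Injective y) (τ : Perm (Fin k)) : Tuple.sort (y ∘ τ) = τ⁻¹ * Tuple.sort y := by
  have h := Tuple.comp_perm_comp_sort_eq_comp_sort (f := y) (σ := τ)
  rw [Function.comp_assoc, ← Perm.coe_mul] at h
  rw [eq_inv_mul_iff_mul_eq]
  exact Equiv.ext fun i => hy (congrFun h i)

def HasUniformFibres {β γ : Type*} [Fintype β] [Fintype γ] [DecidableEq γ] (f : β → γ) : Prop :=
  ∀ c, #{b | f b = c} * Fintype.card γ = Fintype.card β

section HasUniformFibres

variable {β γ δ : Type*} [Fintype β] [Fintype γ] [Fintype δ] [DecidableEq γ]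

theorem HasUniformFibres.comp_fst {f : β → γ} (hf : HasUniformFibres f) :
    HasUniformFibres fun p : β × δ => f p.1 := by
  intro c
  have hfibre : (univ.filter (f · = c)) ×ˢ (univ : Finset δ) = univ.filter (f ·.1 = c) := by
    ext; simp
  rw [← hfibre, card_product, Finset.card_univ, mul_right_comm, hf c, Fintype.card_prod]

theorem hasUniformFibres_snd : HasUniformFibres (Prod.snd : β × γ → γ) := by
  intro c
  have hfibre : (univ : Finset β) ×ˢ {c} = univ.filter (·.2 = c) := by
    ext ⟨b, c'⟩; simp [eq_comm]
  rw [← hfibre, card_product, card_singleton, Finset.card_univ, mul_one, Fintype.card_prod]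

theorem hasUniformFibres_of_bijective_mul_right {G H : Type*} [Group G] [Fintype G] [Fintype H]
    (ψ : H → G) {F : G → γ} (hF : ∀ s, Bijective fun h => F (s * ψ h)) :
    HasUniformFibres F := by
  intro c
  have hcard : Fintype.card H = Fintype.card γ := Fintype.card_of_bijective (hF 1)
  have hunique (s : G) : #{h | F (s * ψ h) = c} = 1 := by
    obtain ⟨h, hh, huniq⟩ := (hF s).existsUnique c
    exact Finset.card_eq_one.2 ⟨h, by ext; simpa using ⟨huniq _, fun h' => h' ▸ hh⟩⟩
  have hshift (h : H) : #{s | F (s * ψ h) = c} = #{s | F s = c} :=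
    Finset.card_equiv (Equiv.mulRight (ψ h)) (by simp)
  calc #{s | F s = c} * Fintype.card γ
      = ∑ h : H, #{s | F (s * ψ h) = c} := by simp [hshift, hcard, mul_comm]
    _ = ∑ s : G, #{h | F (s * ψ h) = c} := by
      simp only [Finset.card_filter]
      exact Finset.sum_comm
    _ = Fintype.card G := by simp [hunique]

end HasUniformFibres

section Encrypermute

variable {α : Type*} [LinearOrder α] {n k t : ℕ} (hkn : k ≤ n) (hkt : k + t ≤ n)
  (e : Perm (Fin k) ≃ ZMod (k !)) (ι : (Fin t → α) → ZMod (k !))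

def encrypermute (X : Fin n → α) (v : ZMod (k !)) : ZMod (k !) :=
  if Injective X then
    ι (fun i : Fin t => X (Fin.castLE hkt (Fin.natAdd k i))) +
      e (Tuple.sort fun i : Fin k => X (Fin.castLE hkn i))
  else v

theorem bijective_encrypermute_comp_viaFintypeEmbedding {X : Fin n → α} (hX : Injective X)
    (v : ZMod (k !)) :
    Bijective fun τ : Perm (Fin k) =>
      encrypermute hkn hkt e ι (X ∘ τ.viaFintypeEmbedding (Fin.castLEEmb hkn)) v := by
  set head : Fin k → α := fun i => X (Fin.castLE hkn i)
  have hhead (τ : Perm (Fin k)) :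
      (fun i => X (τ.viaFintypeEmbedding (Fin.castLEEmb hkn) (Fin.castLE hkn i))) = head ∘ τ :=
    funext fun i => congrArg X (τ.viaFintypeEmbedding_apply_image (Fin.castLEEmb hkn) i)
  have htail (τ : Perm (Fin k)) (i : Fin t) :
      τ.viaFintypeEmbedding (Fin.castLEEmb hkn) (Fin.castLE hkt (Fin.natAdd k i)) =
        Fin.castLE hkt (Fin.natAdd k i) := by
    refine τ.viaFintypeEmbedding_apply_notMem_range _ ?_
    rintro ⟨j, hj⟩
    have : (j : ℕ) = k + i := congrArg Fin.val hj
    omega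
  have hformula : (fun τ : Perm (Fin k) =>
      encrypermute hkn hkt e ι (X ∘ τ.viaFintypeEmbedding (Fin.castLEEmb hkn)) v) =
      fun τ => ι (fun i : Fin t => X (Fin.castLE hkt (Fin.natAdd k i))) +
        e (τ⁻¹ * Tuple.sort head) := by
    funext τ
    rw [encrypermute, if_pos (hX.comp (Equiv.injective _))]
    simp only [comp_apply, htail, hhead]
    rw [Tuple.sort_comp_perm (y := head) (hX.comp (Fin.castLE_injective hkn))]
  rw [hformula]
  exact (add_right_injective _).bijective_of_finite |>.comp
    (e.bijective.comp ((Group.mulRight_bijective _).comp inv_involutive.bijective))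

theorem hasUniformFibres_encrypermute_comp (x : Fin n → α) :
    HasUniformFibres fun p : Perm (Fin n) × ZMod (k !) =>
      encrypermute hkn hkt e ι (x ∘ p.1) p.2 := by
  by_cases hx : Injective x
  · have hF : HasUniformFibres fun s : Perm (Fin n) => encrypermute hkn hkt e ι (x ∘ s) 0 :=
      hasUniformFibres_of_bijective_mul_right
        (fun τ : Perm (Fin k) => τ.viaFintypeEmbedding (Fin.castLEEmb hkn)) fun s =>
          bijective_encrypermute_comp_viaFintypeEmbedding hkn hkt e ι (hx.comp s.injective) 0
    have hconst (p : Perm (Fin n) × ZMod (k !)) :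
        encrypermute hkn hkt e ι (x ∘ p.1) p.2 = encrypermute hkn hkt e ι (x ∘ p.1) 0 := by
      simp only [encrypermute, if_pos (hx.comp p.1.injective)]
    simpa only [hconst] using hF.comp_fst (δ := ZMod (k !))
  · have hsnd (p : Perm (Fin n) × ZMod (k !)) : encrypermute hkn hkt e ι (x ∘ p.1) p.2 = p.2 :=
      if_neg fun h => hx (h.of_comp_right p.1.surjective)
    simpa only [hsnd] using hasUniformFibres_snd (β := Perm (Fin n)) (γ := ZMod (k !))

end Encrypermute

section Independence

open scoped ENNReal

variable {Ω α β γ : Type*} [MeasurableSpace Ω] {μ : Measure Ω}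
  [MeasurableSpace α] [MeasurableSingletonClass α] [Countable α]
  [MeasurableSpace β] [MeasurableSingletonClass β] [MeasurableSpace γ] [MeasurableSingletonClass γ]

theorem measure_eq_tsum_preimage_singleton_inter {f : Ω → α} (hf : Measurable f) (s : Set Ω) :
    μ s = ∑' x, μ (f ⁻¹' {x} ∩ s) := by
  have h := tsum_measure_preimage_singleton (μ := μ.restrict s) Set.countable_univ
    (fun x _ => hf (measurableSet_singleton x))
  rw [Set.preimage_univ, Measure.restrict_apply_univ,
    tsum_univ fun x => μ.restrict s (f ⁻¹' {x})] at h
  simpa only [Measure.restrict_apply (hf (measurableSet_singleton _))] using h.symm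

theorem indepFun_of_measure_inter_preimage_singleton_eq_mul [IsProbabilityMeasure μ] [Countable β]
    {f : Ω → α} {g : Ω → β} (hf : Measurable f) (hg : Measurable g) (p : β → ℝ≥0∞)
    (h : ∀ x y, μ (f ⁻¹' {x} ∩ g ⁻¹' {y}) = μ (f ⁻¹' {x}) * p y) : IndepFun f g μ := by
  have hlaw (y : β) : μ (g ⁻¹' {y}) = p y := by
    have htotal := measure_eq_tsum_preimage_singleton_inter (μ := μ) hf Set.univ
    simp only [Set.inter_univ, measure_univ] at htotal
    rw [measure_eq_tsum_preimage_singleton_inter hf]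
    simp only [h, ENNReal.tsum_mul_right, ← htotal, one_mul]
  rw [indepFun_iff_map_prod_eq_prod_map_map hf.aemeasurable hg.aemeasurable]
  refine Measure.ext_of_singleton fun ⟨x, y⟩ => ?_
  rw [Measure.map_apply (hf.prodMk hg) (measurableSet_singleton _), ← Set.singleton_prod_singleton,
    Measure.prod_prod, Measure.map_apply hf (measurableSet_singleton _),
    Measure.map_apply hg (measurableSet_singleton _), Set.mk_preimage_prod, h, hlaw]

theorem ProbabilityTheory.IndepFun.indepFun_prodMk [IsProbabilityMeasure μ] [Countable β]
    [Countable γ] {f : Ω → α} {g : Ω → β} {h : Ω → γ}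
    (hf : Measurable f) (hg : Measurable g) (hh : Measurable h)
    (hfg : IndepFun f g μ) (hfgh : IndepFun (fun ω => (f ω, g ω)) h μ) :
    IndepFun f (fun ω => (g ω, h ω)) μ := by
  refine indepFun_of_measure_inter_preimage_singleton_eq_mul hf (hg.prodMk hh)
    (fun p => μ (g ⁻¹' {p.1}) * μ (h ⁻¹' {p.2})) fun x ⟨y, z⟩ => ?_
  have hfgh' := hfgh.measure_inter_preimage_eq_mul {(x, y)} {z} (measurableSet_singleton _)
    (measurableSet_singleton _)
  rw [← Set.singleton_prod_singleton, Set.mk_preimage_prod] at hfgh' ⊢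
  rw [← Set.inter_assoc, hfgh', hfg.measure_inter_preimage_eq_mul _ _ (measurableSet_singleton _)
    (measurableSet_singleton _), mul_assoc]

theorem indepFun_of_hasUniformFibres [IsProbabilityMeasure μ] [Fintype β] [Fintype γ]
    [DecidableEq γ] {D : Ω → α} {W : Ω → β} (hD : Measurable D) (hW : Measurable W)
    (hDW : IndepFun D W μ) (hW_unif : ∀ w, μ (W ⁻¹' {w}) = (Fintype.card β : ℝ≥0∞)⁻¹)
    {g : α → β → γ} (hg : ∀ x, HasUniformFibres (g x)) :
    IndepFun D (fun ω => g (D ω) (W ω)) μ := by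
  have hC : Measurable fun ω => g (D ω) (W ω) :=
    (measurable_of_countable (uncurry g)).comp (hD.prodMk hW)
  refine indepFun_of_measure_inter_preimage_singleton_eq_mul hD hC
    (fun _ => (Fintype.card γ : ℝ≥0∞)⁻¹) fun x c => ?_
  set S : Finset β := univ.filter (g x · = c)
  have hset : D ⁻¹' {x} ∩ (fun ω => g (D ω) (W ω)) ⁻¹' {c} = D ⁻¹' {x} ∩ W ⁻¹' S := by
    ext ω
    simp +contextual [S]
  have : Nonempty β := ⟨W (nonempty_of_isProbabilityMeasure μ).some⟩
  have hS : (#S : ℝ≥0∞) ≠ 0 :=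
    Nat.cast_ne_zero.2 (left_ne_zero_of_mul ((hg x c).symm ▸ Fintype.card_ne_zero))
  have hratio : (#S : ℝ≥0∞) * (Fintype.card β : ℝ≥0∞)⁻¹ = (Fintype.card γ : ℝ≥0∞)⁻¹ := by
    rw [← hg x c, Nat.cast_mul, ENNReal.mul_inv (by simp) (by simp), ← mul_assoc,
      ENNReal.mul_inv_cancel hS (by simp), one_mul]
  rw [hset, hDW.measure_inter_preimage_eq_mul _ _ (measurableSet_singleton x) S.measurableSet,
    ← sum_measure_preimage_singleton _ fun w _ => hW (measurableSet_singleton w)]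
  simp only [hW_unif, sum_const, nsmul_eq_mul, hratio]

end Independence

/-- The output of `Encrypermute_k` is independent of the data.  Let `D` be a sample from an
arbitrary distribution over `({0,1}^d)^n` with `d = 5 log₂ n`, let `X_i = D_{σ(i)}` for a
uniformly random permutation `σ` independent of `D`, and let `C` be the output of
`Encrypermute_k` on `X` (using a fixed linear order `lo` on `{0,1}^d`, a fixed bijection `e`
between permutations of `{1,…,k}` and `{0,…,k!−1}`, a fixed injection `ι` of
`({0,1}^d)^t` into `{0,…,k!−1}`, and a fresh uniform value `u` when `X` is not injective).
Then `D` and `C` are independent. -/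
theorem encrypermute_indep
    {Ω : Type*} [MeasurableSpace Ω] (μ : Measure Ω) [IsProbabilityMeasure μ]
    (n k t d : ℕ) (hkn : k ≤ n) (hkt : k + t ≤ n)
    (lo : LinearOrder (Fin d → Bool))
    (e : Equiv.Perm (Fin k) ≃ ZMod (k !))
    (ι : (Fin t → Fin d → Bool) → ZMod (k !))
    (D : Ω → Fin n → Fin d → Bool) (σ : Ω → Equiv.Perm (Fin n)) (u : Ω → ZMod (k !))
    (hD : Measurable D) (hσ : Measurable σ) (hu : Measurable u)
    (hσunif : ∀ s : Equiv.Perm (Fin n), μ {ω | σ ω = s} = ((n ! : ENNReal))⁻¹)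
    (huunif : ∀ c : ZMod (k !), μ {ω | u ω = c} = ((k ! : ENNReal))⁻¹)
    (hindσ : IndepFun D σ μ)
    (hindu : IndepFun (fun ω => (D ω, σ ω)) u μ) :
    IndepFun D
      (fun ω =>
        if Function.Injective (fun i => D ω (σ ω i)) then
          ι (fun i : Fin t => D ω (σ ω ⟨k + (i : ℕ), by omega⟩)) +
            e (@Tuple.sort _ _ lo (fun i : Fin k => D ω (σ ω (Fin.castLE hkn i))))
        else u ω) μ := by
  have hσu : IndepFun σ u μ := hindu.comp measurable_snd measurable_id
  have hunif : ∀ w : Equiv.Perm (Fin n) × ZMod (k !), μ ((fun ω => (σ ω, u ω)) ⁻¹' {w}) =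
      (Fintype.card (Equiv.Perm (Fin n) × ZMod (k !)) : ENNReal)⁻¹ := by
    rintro ⟨s, v⟩
    rw [← Set.singleton_prod_singleton, Set.mk_preimage_prod,
      hσu.measure_inter_preimage_eq_mul _ _ (measurableSet_singleton _)
        (measurableSet_singleton _), Fintype.card_prod, Fintype.card_perm, Fintype.card_fin,
      ZMod.card, Nat.cast_mul, ENNReal.mul_inv (by simp) (by simp)]
    exact congr_arg₂ (· * ·) (hσunif s) (huunif v)
  convert indepFun_of_hasUniformFibres hD (hσ.prodMk hu) (hindσ.indepFun_prodMk hD hσ hu hindu)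
    hunif (g := fun x p => encrypermute hkn hkt e ι (x ∘ p.1) p.2)
    (hasUniformFibres_encrypermute_comp hkn hkt e ι) using 2 with ω
  -- the statement decides injectivity with the pointwise `DecidableEq` instance, `encrypermute`
  -- with the one coming from `lo`
  unfold encrypermute
  congr
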